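/- Let A₁,...,A_n be real symmetric m×m matrices with sorted eigenvalue vectors Λ_{A_i} ∈ ℝ^m. Let d_𝒢(A_{1:n}) = min over alignment-consistent families of orthogonal matrices {P_{i,j}} of (1/2)Σ_{i,j∈[n]} ⦀A_i P_{i,j} − P_{i,j} A_j⦀_F. Then d_𝒢(A_{1:n}) = (1/2) Σ_{i,j∈[n]} ‖Λ_{A_i} − Λ_{A_j}‖₂. -/

import Mathlib

/-!
Diagonalize `A i = V i * diagonal (Λ i) * (V i)ᵀ` with orthogonal `V i`. For any orthogonal `P`,
orthogonal invariance of the Frobenius norm turns `A i * P - P * A j` into the matrix with entries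
`(Λ i a - Λ j b) * W a b`, where `W = (V i)ᵀ * P * V j` is orthogonal. The squares `W a b ^ 2` form
a doubly stochastic matrix, so by Birkhoff's theorem the squared norm is at least the value of
`∑ a, (Λ i a - Λ j (σ a)) ^ 2` for some permutation `σ`, which by the rearrangement inequality is at
least `∑ a, (Λ i a - Λ j a) ^ 2` (Hoffman–Wielandt). The family `P i j = V i * (V j)ᵀ` is
alignment-consistent and gives `W = 1`, so it attains this lower bound for every pair at once.
-/

open Matrix Finset

theorem Monovary.sum_sub_sq_le_sum_sub_comp_perm_sq {ι : Type*} [Fintype ι] {f g : ι → ℝ}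
    (hfg : Monovary f g) (σ : Equiv.Perm ι) :
    ∑ i, (f i - g i) ^ 2 ≤ ∑ i, (f i - g (σ i)) ^ 2 := by
  have hsq : ∑ i, g (σ i) ^ 2 = ∑ i, g i ^ 2 := Equiv.sum_comp σ (g · ^ 2)
  have := hfg.sum_mul_comp_perm_le_sum_mul (σ := σ)
  simp only [sub_sq, sum_add_distrib, sum_sub_distrib, mul_assoc, ← mul_sum]
  linarith

namespace Matrix

theorem transpose_mem_orthogonalGroup {n R : Type*} [Fintype n] [DecidableEq n] [CommRing R]
    {U : Matrix n n R} (hU : U ∈ orthogonalGroup n R) : Uᵀ ∈ orthogonalGroup n R :=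
  (mem_orthogonalGroup_iff _ _).2 <| by rwa [transpose_transpose, ← mem_orthogonalGroup_iff']

theorem sum_sum_sq_eq_trace_transpose_mul_self {m n : Type*} [Fintype m] [Fintype n]
    (M : Matrix m n ℝ) : ∑ a, ∑ b, M a b ^ 2 = trace (Mᵀ * M) := by
  simp only [trace, diag, mul_apply, transpose_apply, sq]
  exact sum_comm

theorem sum_sum_sq_mul_mul_of_mem_orthogonalGroup {m n : Type*} [Fintype m] [DecidableEq m]
    [Fintype n] [DecidableEq n] {U : Matrix m m ℝ} {V : Matrix n n ℝ}
    (hU : U ∈ orthogonalGroup m ℝ) (hV : V ∈ orthogonalGroup n ℝ) (M : Matrix m n ℝ) :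
    ∑ a, ∑ b, (U * M * V) a b ^ 2 = ∑ a, ∑ b, M a b ^ 2 := by
  simp only [sum_sum_sq_eq_trace_transpose_mul_self, transpose_mul]
  calc trace (Vᵀ * (Mᵀ * Uᵀ) * (U * M * V)) = trace (Vᵀ * (Mᵀ * (Uᵀ * U) * M * V)) := by
        simp only [Matrix.mul_assoc]
    _ = trace (Mᵀ * M * (V * Vᵀ)) := by
        rw [(mem_orthogonalGroup_iff' _ _).1 hU, Matrix.mul_one, trace_mul_comm]
        simp only [Matrix.mul_assoc]
    _ = trace (Mᵀ * M) := by rw [(mem_orthogonalGroup_iff _ _).1 hV, Matrix.mul_one]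

section

variable {ι : Type*} [Fintype ι] [DecidableEq ι]

theorem IsHermitian.exists_orthogonal_eq_mul_diagonal_mul_transpose {A : Matrix ι ι ℝ}
    (hA : A.IsHermitian) (σ : Equiv.Perm ι) :
    ∃ V ∈ orthogonalGroup ι ℝ, A = V * diagonal (hA.eigenvalues ∘ σ) * Vᵀ := by
  set U : Matrix ι ι ℝ := (hA.eigenvectorUnitary : Matrix ι ι ℝ)
  have hstar : star U = Uᵀ := by
    rw [star_eq_conjTranspose, conjTranspose_eq_transpose_of_trivial]
  have hU : Uᵀ * U = 1 := hstar ▸ Unitary.coe_star_mul_self hA.eigenvectorUnitary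
  have hAU : A = U * diagonal hA.eigenvalues * Uᵀ := by
    rw [← hstar]; simpa [Unitary.conjStarAlgAut_apply] using hA.spectral_theorem
  refine ⟨U.submatrix id σ, (mem_orthogonalGroup_iff' _ _).2 ?_, ?_⟩
  · rw [transpose_submatrix, ← submatrix_mul _ _ _ _ _ Function.bijective_id, hU,
      submatrix_one_equiv]
  · rw [transpose_submatrix, ← submatrix_diagonal_equiv, submatrix_mul_equiv,
      submatrix_mul_equiv, submatrix_id_id, ← hAU]

/-- By Birkhoff's theorem the linear functional `S ↦ ∑ a, ∑ b, C a b * S a b` attains its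
minimum over the doubly stochastic matrices at a permutation matrix. -/
theorem le_sum_sum_mul_of_mem_doublyStochastic {C : ι → ι → ℝ} {S : Matrix ι ι ℝ} {c : ℝ}
    (hC : ∀ σ : Equiv.Perm ι, c ≤ ∑ a, C a (σ a)) (hS : S ∈ doublyStochastic ℝ ι) :
    c ≤ ∑ a, ∑ b, C a b * S a b := by
  let f : Matrix ι ι ℝ →ₗ[ℝ] ℝ :=
    { toFun := fun S => ∑ a, ∑ b, C a b * S a b
      map_add' := fun S T => by simp only [add_apply, mul_add, sum_add_distrib]
      map_smul' := fun r S => by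
        simp only [smul_apply, smul_eq_mul, mul_sum, RingHom.id_apply, mul_left_comm] }
  rw [← SetLike.mem_coe, doublyStochastic_eq_convexHull_permMatrix] at hS
  obtain ⟨_, ⟨σ, rfl⟩, hσ⟩ :=
    (f.concaveOn convex_univ).exists_le_of_mem_convexHull (Set.subset_univ _) hS
  calc c ≤ ∑ a, C a (σ a) := hC σ
    _ = f (σ.permMatrix ℝ) := by simp [f, PEquiv.toMatrix_apply]
    _ ≤ f S := hσ

theorem map_sq_mem_doublyStochastic_of_mem_orthogonalGroup {W : Matrix ι ι ℝ}
    (hW : W ∈ orthogonalGroup ι ℝ) : W.map (· ^ 2) ∈ doublyStochastic ℝ ι := by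
  have hrow := congr_fun₂ ((mem_orthogonalGroup_iff _ _).1 hW)
  have hcol := congr_fun₂ ((mem_orthogonalGroup_iff' _ _).1 hW)
  simp only [mul_apply, transpose_apply] at hrow hcol
  refine mem_doublyStochastic_iff_sum.2 ⟨fun a b => sq_nonneg _, fun a => ?_, fun b => ?_⟩
  · simpa [sq] using hrow a a
  · simpa [sq] using hcol b b

theorem diagonal_mul_sub_mul_diagonal_apply {R : Type*} [CommRing R] (d e : ι → R)
    (W : Matrix ι ι R) (a b : ι) :
    (diagonal d * W - W * diagonal e) a b = (d a - e b) * W a b := by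
  rw [sub_apply, diagonal_mul, mul_diagonal, sub_mul, mul_comm (e b)]

theorem sum_sub_sq_le_sum_sum_sq_diagonal_mul_sub_mul_diagonal {d e : ι → ℝ}
    (hde : Monovary d e) {W : Matrix ι ι ℝ} (hW : W ∈ orthogonalGroup ι ℝ) :
    ∑ a, (d a - e a) ^ 2 ≤ ∑ a, ∑ b, (diagonal d * W - W * diagonal e) a b ^ 2 := by
  simpa only [diagonal_mul_sub_mul_diagonal_apply, mul_pow, map_apply] using
    le_sum_sum_mul_of_mem_doublyStochastic (C := fun a b => (d a - e b) ^ 2)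
      hde.sum_sub_sq_le_sum_sub_comp_perm_sq
      (map_sq_mem_doublyStochastic_of_mem_orthogonalGroup hW)

theorem mul_sub_mul_eq_of_eq_mul_diagonal_mul_transpose {A B P V V' : Matrix ι ι ℝ}
    {d e : ι → ℝ} (hV : V ∈ orthogonalGroup ι ℝ) (hV' : V' ∈ orthogonalGroup ι ℝ)
    (hA : A = V * diagonal d * Vᵀ) (hB : B = V' * diagonal e * V'ᵀ) :
    A * P - P * B =
      V * (diagonal d * (Vᵀ * P * V') - (Vᵀ * P * V') * diagonal e) * V'ᵀ := by
  calc A * P - P * B = V * diagonal d * Vᵀ * P * (V' * V'ᵀ) - (V * Vᵀ) * P * B := by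
        rw [(mem_orthogonalGroup_iff _ _).1 hV, (mem_orthogonalGroup_iff _ _).1 hV',
          Matrix.mul_one, Matrix.one_mul, hA]
    _ = _ := by rw [hB]; noncomm_ring

theorem sum_sum_sq_mul_sub_mul_eq_diagonal_mul_sub_mul_diagonal {A B P V V' : Matrix ι ι ℝ}
    {d e : ι → ℝ} (hV : V ∈ orthogonalGroup ι ℝ) (hV' : V' ∈ orthogonalGroup ι ℝ)
    (hA : A = V * diagonal d * Vᵀ) (hB : B = V' * diagonal e * V'ᵀ) :
    ∑ a, ∑ b, (A * P - P * B) a b ^ 2 =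
      ∑ a, ∑ b, (diagonal d * (Vᵀ * P * V') - (Vᵀ * P * V') * diagonal e) a b ^ 2 := by
  rw [mul_sub_mul_eq_of_eq_mul_diagonal_mul_transpose hV hV' hA hB,
    sum_sum_sq_mul_mul_of_mem_orthogonalGroup hV (transpose_mem_orthogonalGroup hV')]

theorem hoffman_wielandt {A B P V V' : Matrix ι ι ℝ} {d e : ι → ℝ} (hde : Monovary d e)
    (hV : V ∈ orthogonalGroup ι ℝ) (hV' : V' ∈ orthogonalGroup ι ℝ)
    (hA : A = V * diagonal d * Vᵀ) (hB : B = V' * diagonal e * V'ᵀ)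
    (hP : P ∈ orthogonalGroup ι ℝ) :
    ∑ a, (d a - e a) ^ 2 ≤ ∑ a, ∑ b, (A * P - P * B) a b ^ 2 := by
  rw [sum_sum_sq_mul_sub_mul_eq_diagonal_mul_sub_mul_diagonal hV hV' hA hB]
  exact sum_sub_sq_le_sum_sum_sq_diagonal_mul_sub_mul_diagonal hde <|
    mul_mem (mul_mem (transpose_mem_orthogonalGroup hV) hP) hV'

theorem sum_sum_sq_mul_sub_mul_mul_transpose_eq {A B V V' : Matrix ι ι ℝ} {d e : ι → ℝ}
    (hV : V ∈ orthogonalGroup ι ℝ) (hV' : V' ∈ orthogonalGroup ι ℝ)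
    (hA : A = V * diagonal d * Vᵀ) (hB : B = V' * diagonal e * V'ᵀ) :
    ∑ a, ∑ b, (A * (V * V'ᵀ) - (V * V'ᵀ) * B) a b ^ 2 = ∑ a, (d a - e a) ^ 2 := by
  have hW : Vᵀ * (V * V'ᵀ) * V' = 1 := by
    rw [← Matrix.mul_assoc, (mem_orthogonalGroup_iff' _ _).1 hV, Matrix.one_mul,
      (mem_orthogonalGroup_iff' _ _).1 hV']
  rw [sum_sum_sq_mul_sub_mul_eq_diagonal_mul_sub_mul_diagonal hV hV' hA hB, hW]
  simp only [diagonal_mul_sub_mul_diagonal_apply]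
  simp only [one_apply, mul_ite, mul_one, mul_zero, ite_pow, zero_pow two_ne_zero, sum_ite_eq,
    mem_univ, if_true]

end

end Matrix

/-- For real symmetric matrices compared with alignment-consistent orthogonal
families and the Frobenius norm, the 𝒢-align distance equals half the sum of
pairwise Euclidean distances between the sorted eigenvalue spectra. -/
theorem G_align_orthogonal_spectra {m n : ℕ}
    (A : Fin n → Matrix (Fin m) (Fin m) ℝ)
    (hA : ∀ i, (A i).IsHermitian)
    (Λ : Fin n → Fin m → ℝ)
    (hΛ_mono : ∀ i, Monotone (Λ i))
    (hΛ : ∀ i, ∃ σ : Equiv.Perm (Fin m), ∀ a, Λ i a = (hA i).eigenvalues (σ a))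
    (dG : ℝ)
    (hdG : IsLeast {x : ℝ | ∃ P : Fin n → Fin n → Matrix (Fin m) (Fin m) ℝ,
        (∀ i j, P i j * (P i j)ᵀ = 1 ∧ (P i j)ᵀ * P i j = 1) ∧
        (∀ i j k, P i k * P k j = P i j) ∧ (∀ i, P i i = 1) ∧
        x = (1 / 2) * ∑ i, ∑ j,
          Real.sqrt (∑ a, ∑ b, ((A i * P i j - P i j * A j) a b) ^ 2)} dG) :
    dG = (1 / 2) * ∑ i, ∑ j, Real.sqrt (∑ a, (Λ i a - Λ j a) ^ 2) := by
  have hdecomp : ∀ i, ∃ V ∈ orthogonalGroup (Fin m) ℝ, A i = V * diagonal (Λ i) * Vᵀ := by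
    intro i
    obtain ⟨σ, hσ⟩ := hΛ i
    rw [show Λ i = (hA i).eigenvalues ∘ σ from funext hσ]
    exact (hA i).exists_orthogonal_eq_mul_diagonal_mul_transpose σ
  choose V hV hAV using hdecomp
  have hVtV : ∀ k, (V k)ᵀ * V k = 1 := fun k => (mem_orthogonalGroup_iff' _ _).1 (hV k)
  refine hdG.unique ⟨⟨fun i j => V i * (V j)ᵀ, fun i j => ?orth, fun i j k => ?consistent,
    fun i => ?refl, ?cost⟩, ?lower⟩
  case orth =>
    have hP := mul_mem (hV i) (transpose_mem_orthogonalGroup (hV j))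
    exact ⟨(mem_orthogonalGroup_iff _ _).1 hP, (mem_orthogonalGroup_iff' _ _).1 hP⟩
  case consistent => simp only [Matrix.mul_assoc, ← Matrix.mul_assoc (V k)ᵀ, hVtV, Matrix.one_mul]
  case refl => exact (mem_orthogonalGroup_iff _ _).1 (hV i)
  case cost => simp only [sum_sum_sq_mul_sub_mul_mul_transpose_eq (hV _) (hV _) (hAV _) (hAV _)]
  case lower =>
    rintro x ⟨P, hP, -, -, rfl⟩
    gcongr (1 / 2) * ∑ i, ∑ j, Real.sqrt ?_ with i _ j _
    exact hoffman_wielandt ((hΛ_mono i).monovary (hΛ_mono j)) (hV i) (hV j) (hAV i) (hAV j)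
      ((mem_orthogonalGroup_iff _ _).2 (hP i j).1)
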